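/- arXiv:2004.01895 — 3 statements merged into one kernel-verified Lean document; each statement's English description precedes it below -/
import Mathlib

section
/- Let $n \ge 1$ and $1 \le p < q < \infty$, and let $f(x) = |x|^{-n/q}$ for $x \in \mathbb{R}^n \setminus \{0\}$. Then $f$ belongs to the Morrey space $\mathcal{M}^p_q(\mathbb{R}^n)$ and $\|f\|_{\mathcal{M}^p_q} = |B(0,1)|^{1/q} (1 - p/q)^{-1/p}$, where $|B(0,1)|$ is the Lebesgue measure of the unit ball in $\mathbb{R}^n$. -/
open MeasureTheory

section Aux
set_option linter.unusedSectionVars false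
set_option linter.unusedVariables false

namespace MorreyAux
open Real Metric Set Measure

variable {E : Type*} [NormedAddCommGroup E] [NormedSpace ℝ E] [MeasurableSpace E] [BorelSpace E]
  [Nontrivial E] (μ : Measure E) [FiniteDimensional ℝ E] [μ.IsAddHaarMeasure]

local notation "dim" => Module.finrank ℝ

variable {α r : ℝ}

lemma integrable_comp_norm {f : ℝ → ℝ} (hf : Measurable f)
    (h : IntegrableOn (fun y => f y * y ^ (dim E - 1)) (Ioi (0:ℝ)) volume) :
    Integrable (fun x => f ‖x‖) μ := by
  -- step 1: move to subtype {0}ᶜ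
  rw [← restrict_compl_singleton (0 : E) (μ := μ),
    ← map_comap_subtype_coe (measurableSet_singleton (0:E)).compl,
    (MeasurableEmbedding.subtype_coe (measurableSet_singleton (0:E)).compl).integrable_map_iff]
  -- step 2: transfer through the homeomorphism
  rw [show ((fun x => f ‖x‖) ∘ (Subtype.val : ({(0:E)}ᶜ : Set E) → E))
      = (fun p : Metric.sphere (0:E) 1 × Ioi (0:ℝ) => f p.2) ∘ (homeomorphUnitSphereProd E) by
        funext x; simp [homeomorphUnitSphereProd],
    (μ.measurePreserving_homeomorphUnitSphereProd).integrable_comp_emb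
      (Homeomorph.measurableEmbedding _)]
  -- step 3: integrability on the product
  have hm : Measurable fun p : Metric.sphere (0:E) 1 × Ioi (0:ℝ) => f p.2 :=
    hf.comp (measurable_subtype_coe.comp measurable_snd)
  rw [integrable_prod_iff hm.aestronglyMeasurable]
  have key : Integrable (fun y : Ioi (0:ℝ) => f y) (volumeIoiPow (dim E - 1)) := by
    rw [Measure.volumeIoiPow, integrable_withDensity_iff
      ((measurable_subtype_coe.pow_const _).ennreal_ofReal)
      (Filter.Eventually.of_forall fun x => ENNReal.ofReal_lt_top)]
    have : (fun y : Ioi (0:ℝ) => f y * (ENNReal.ofReal (y.1 ^ (dim E - 1))).toReal)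
        = (fun y => f y * y ^ (dim E - 1)) ∘ (Subtype.val : Ioi (0:ℝ) → ℝ) := by
      funext y
      simp [ENNReal.toReal_ofReal (pow_nonneg y.2.le _)]
    rw [this, ← (MeasurableEmbedding.subtype_coe measurableSet_Ioi).integrable_map_iff,
      map_comap_subtype_coe measurableSet_Ioi]
    exact h
  refine ⟨Filter.Eventually.of_forall fun x => key, ?_⟩
  exact (integrable_const _ : Integrable (fun _ : Metric.sphere (0:E) 1 => ∫ y : Ioi (0:ℝ), ‖f y.1‖ ∂(Measure.volumeIoiPow (dim E - 1))) μ.toSphere)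


lemma aux_indicator (hα : 0 < α) (x : E) :
    (if ‖x‖ < r then ‖x‖ ^ (-α) else 0) = (ball (0:E) r).indicator (fun x => ‖x‖ ^ (-α)) x := by
  by_cases h : x ∈ ball (0:E) r
  · rw [indicator_of_mem h]
    rw [mem_ball, dist_zero_right] at h
    simp [h]
  · rw [indicator_of_notMem h]
    rw [mem_ball, dist_zero_right] at h
    simp [h]

lemma aux_line_indicator (hα : 0 < α) (y : ℝ) (g : ℝ → ℝ) :
    (if y < r then y ^ (-α) else 0) * g y = (Iio r).indicator (fun y => y ^ (-α) * g y) y := by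
  by_cases h : y < r
  · rw [indicator_of_mem (mem_Iio.2 h)]; simp [h]
  · rw [indicator_of_notMem (by simpa using h)]; simp [h]

lemma aux_line_integrable (hα : 0 < α) (hαn : α < dim E) (hr : 0 < r) :
    IntegrableOn (fun y => (if y < r then y ^ (-α) else 0) * y ^ (dim E - 1)) (Ioi (0:ℝ))
      volume := by
  have h1 : (fun y : ℝ => (if y < r then y ^ (-α) else 0) * y ^ (dim E - 1))
      = (Iio r).indicator (fun y => y ^ (-α) * y ^ (dim E - 1)) := by
    funext y; exact aux_line_indicator hα y _
  rw [h1, IntegrableOn, integrable_indicator_iff measurableSet_Iio, IntegrableOn,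
    Measure.restrict_restrict measurableSet_Iio, Set.Iio_inter_Ioi]
  have h2 : IntegrableOn (fun y : ℝ => y ^ ((dim E : ℝ) - 1 - α)) (Ioo 0 r) volume :=
    ((intervalIntegral.intervalIntegrable_rpow' (by linarith)).1).mono_set Ioo_subset_Ioc_self
  refine h2.congr_fun (fun y hy => ?_) measurableSet_Ioo
  have hy0 : (0:ℝ) < y := hy.1
  rw [← Real.rpow_natCast y (dim E - 1), ← Real.rpow_add hy0]
  congr 1
  rw [Nat.cast_sub Module.finrank_pos]
  push_cast
  ring_nf

lemma aux_line_integral (hα : 0 < α) (hαn : α < dim E) (hr : 0 < r) :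
    ∫ y in Ioi (0:ℝ), y ^ (dim E - 1) • (if y < r then y ^ (-α) else 0)
      = r ^ ((dim E : ℝ) - α) / ((dim E : ℝ) - α) := by
  have h1 : ∀ y : ℝ, y ^ (dim E - 1) • (if y < r then y ^ (-α) else 0)
      = (Iio r).indicator (fun y => y ^ (-α) * y ^ (dim E - 1)) y := by
    intro y
    rw [smul_eq_mul, mul_comm]
    exact aux_line_indicator hα y _
  simp_rw [h1]
  rw [setIntegral_indicator measurableSet_Iio, Set.Ioi_inter_Iio]
  rw [setIntegral_congr_fun measurableSet_Ioo
    (g := fun y : ℝ => y ^ ((dim E : ℝ) - 1 - α)) ?_]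
  · rw [← integral_Ioc_eq_integral_Ioo, ← intervalIntegral.integral_of_le hr.le,
      integral_rpow (Or.inl (by linarith))]
    rw [Real.zero_rpow (by linarith)]
    congr 1 <;> ring
  · intro y hy
    have hy0 : (0:ℝ) < y := hy.1
    simp only
    rw [← Real.rpow_natCast y (dim E - 1), ← Real.rpow_add hy0]
    congr 1
    rw [Nat.cast_sub Module.finrank_pos]
    push_cast
    ring

lemma aux_ball_integrable (hα : 0 < α) (hαn : α < dim E) (hr : 0 < r) :
    IntegrableOn (fun x : E => ‖x‖ ^ (-α)) (ball (0:E) r) μ := by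
  have key : Integrable (fun x : E => if ‖x‖ < r then ‖x‖ ^ (-α) else 0) μ := by
    apply integrable_comp_norm μ (f := fun y => if y < r then y ^ (-α) else 0)
    · exact Measurable.ite measurableSet_Iio (by fun_prop) measurable_const
    · exact aux_line_integrable hα hαn hr
  rw [← integrable_indicator_iff measurableSet_ball]
  refine key.congr (Filter.Eventually.of_forall fun x => ?_)
  exact aux_indicator hα x

lemma aux_ball_integral (hα : 0 < α) (hαn : α < dim E) (hr : 0 < r) :
    ∫ x in ball (0:E) r, ‖x‖ ^ (-α) ∂μ
      = (dim E : ℝ) * (μ (ball (0:E) 1)).toReal * (r ^ ((dim E : ℝ) - α) / ((dim E : ℝ) - α)) := by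
  have h1 : ∫ x in ball (0:E) r, ‖x‖ ^ (-α) ∂μ
      = ∫ x, (if ‖x‖ < r then ‖x‖ ^ (-α) else 0) ∂μ := by
    rw [← integral_indicator measurableSet_ball]
    exact integral_congr_ae (Filter.Eventually.of_forall fun x => (aux_indicator hα x).symm)
  rw [h1, integral_fun_norm_addHaar μ (fun y => if y < r then y ^ (-α) else 0),
    aux_line_integral hα hαn hr, nsmul_eq_mul, smul_eq_mul]
  rw [measureReal_def]
  ring

lemma aux_ball_compare (hα : 0 < α) (hαn : α < dim E) (hr : 0 < r) (a : E) :
    ∫ x in ball a r, ‖x‖ ^ (-α) ∂μ ≤ ∫ x in ball (0:E) r, ‖x‖ ^ (-α) ∂μ := by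
  set g : E → ℝ := fun x => ‖x‖ ^ (-α) with hg
  set c : ℝ := r ^ (-α) with hc
  have hIa : IntegrableOn g (ball a r) μ := by
    refine (aux_ball_integrable μ hα hαn (r := ‖a‖ + r) (by positivity)).mono_set ?_
    exact ball_subset_ball' (by rw [dist_zero_right]; linarith)
  have hI0 : IntegrableOn g (ball (0:E) r) μ := aux_ball_integrable μ hα hαn hr
  have hCa : IntegrableOn (fun _ : E => c) (ball a r) μ :=
    integrableOn_const measure_ball_lt_top.ne
  have hC0 : IntegrableOn (fun _ : E => c) (ball (0:E) r) μ :=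
    integrableOn_const measure_ball_lt_top.ne
  have hvol : μ (ball a r) = μ (ball (0:E) r) := by
    rw [Measure.addHaar_ball μ a hr.le, Measure.addHaar_ball μ 0 hr.le]
  set h : E → ℝ := fun x => g x - c with hh
  have hIha : IntegrableOn h (ball a r) μ := hIa.sub hCa
  have hIh0 : IntegrableOn h (ball (0:E) r) μ := hI0.sub hC0
  have key : ∫ x in ball a r, h x ∂μ ≤ ∫ x in ball (0:E) r, h x ∂μ := by
    have h1 : ∫ x in ball a r, h x ∂μ
        = (∫ x in ball a r ∩ ball (0:E) r, h x ∂μ) + ∫ x in ball a r \ ball (0:E) r, h x ∂μ :=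
      (integral_inter_add_diff measurableSet_ball hIha).symm
    have h2 : ∫ x in ball (0:E) r, h x ∂μ
        = (∫ x in ball (0:E) r ∩ ball a r, h x ∂μ) + ∫ x in ball (0:E) r \ ball a r, h x ∂μ :=
      (integral_inter_add_diff measurableSet_ball hIh0).symm
    have h3 : ∫ x in ball a r \ ball (0:E) r, h x ∂μ ≤ 0 := by
      refine setIntegral_nonpos (measurableSet_ball.diff measurableSet_ball) fun x hx => ?_
      have hxr : r ≤ ‖x‖ := by
        have := hx.2
        rw [mem_ball, dist_zero_right, not_lt] at this
        exact this
      have : g x ≤ c := Real.rpow_le_rpow_of_nonpos hr hxr (by linarith)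
      simpa [hh] using this
    have h4 : 0 ≤ ∫ x in ball (0:E) r \ ball a r, h x ∂μ := by
      refine setIntegral_nonneg_ae (measurableSet_ball.diff measurableSet_ball) ?_
      have h0 : ∀ᵐ x ∂μ, x ≠ 0 := by
        rw [ae_iff]
        simpa using measure_singleton (0 : E)
      filter_upwards [h0] with x hx0 hx
      have hxr : ‖x‖ ≤ r := by
        have := hx.1
        rw [mem_ball, dist_zero_right] at this
        exact this.le
      have hx0' : 0 < ‖x‖ := norm_pos_iff.2 hx0
      have : c ≤ g x := Real.rpow_le_rpow_of_nonpos hx0' hxr (by linarith)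
      simpa [hh] using this
    rw [h1, h2, inter_comm]
    linarith
  have ea : ∫ x in ball a r, g x ∂μ = (∫ x in ball a r, h x ∂μ) + (μ (ball a r)).toReal * c := by
    have h5 := integral_add hIha hCa
    rw [setIntegral_const, smul_eq_mul, measureReal_def] at h5
    rw [← h5]
    simp [hh]
  have e0 : ∫ x in ball (0:E) r, g x ∂μ
      = (∫ x in ball (0:E) r, h x ∂μ) + (μ (ball (0:E) r)).toReal * c := by
    have h5 := integral_add hIh0 hC0
    rw [setIntegral_const, smul_eq_mul, measureReal_def] at h5
    rw [← h5]
    simp [hh]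
  rw [ea, e0, hvol]
  linarith


lemma compute_const (n : ℕ) (hn : 1 ≤ n) (p q r V : ℝ) (hp : 1 ≤ p) (hpq : p < q) (hr : 0 < r)
    (hV : 0 < V) :
    (r ^ n * V) ^ (1/q - 1/p) * ((n:ℝ) * V * (r ^ ((n:ℝ) - (n*p/q)) / ((n:ℝ) - n*p/q))) ^ (1/p)
      = V ^ (1/q) * (1 - p/q) ^ (-(1/p)) := by
  have hp0 : 0 < p := by linarith
  have hq0 : 0 < q := by linarith
  have hn0 : (0:ℝ) < n := by exact_mod_cast hn
  have h1 : 0 < 1 - p/q := by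
    rw [sub_pos, div_lt_one hq0]; exact hpq
  have hnα : (n:ℝ) - n*p/q = n * (1 - p/q) := by ring
  have hnα0 : 0 < (n:ℝ) - n*p/q := by rw [hnα]; positivity
  -- rewrite the n*V*(...) factor as V * (1-p/q)⁻¹ * r^((n:ℝ) - n*p/q)
  have h2 : (n:ℝ) * V * (r ^ ((n:ℝ) - (n*p/q)) / ((n:ℝ) - n*p/q))
      = V * (1 - p/q)⁻¹ * r ^ ((n:ℝ) - n*p/q) := by
    rw [hnα]
    have gen : ∀ a b c d : ℝ, a ≠ 0 → a * b * (c / (a * d)) = b * d⁻¹ * c := by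
      intro a b c d ha
      rw [div_eq_mul_inv, mul_inv,
        show a * b * (c * (a⁻¹ * d⁻¹)) = (a * a⁻¹) * (b * c * d⁻¹) by ring, mul_inv_cancel₀ ha]
      ring
    exact gen _ _ _ _ hn0.ne'
  rw [h2]
  have hrn : r ^ n = r ^ (n:ℝ) := (rpow_natCast r n).symm
  rw [hrn]
  have hrpow : ∀ y : ℝ, 0 ≤ r ^ y := fun y => (rpow_pos_of_pos hr y).le
  rw [mul_rpow (hrpow _) hV.le, mul_rpow (by positivity) (hrpow _),
    mul_rpow hV.le (by positivity)]
  rw [← rpow_mul hr.le, ← rpow_mul hr.le]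
  have hrexp : r ^ ((n:ℝ) * (1/q - 1/p)) * r ^ (((n:ℝ) - n*p/q) * (1/p)) = 1 := by
    rw [← rpow_add hr]
    have : (n:ℝ) * (1/q - 1/p) + ((n:ℝ) - n*p/q) * (1/p) = 0 := by
      field_simp
      ring
    rw [this, rpow_zero]
  have hVexp : V ^ (1/q - 1/p) * V ^ (1/p) = V ^ (1/q) := by
    rw [← rpow_add hV]; ring_nf
  have hinv : ((1 - p/q)⁻¹) ^ (1/p) = (1 - p/q) ^ (-(1/p)) := by
    rw [← rpow_neg_one, ← rpow_mul h1.le]; ring_nf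
  calc r ^ ((n:ℝ) * (1/q - 1/p)) * V ^ (1/q - 1/p) *
        (V ^ (1/p) * ((1 - p/q)⁻¹) ^ (1/p) * r ^ (((n:ℝ) - n*p/q) * (1/p)))
      = (r ^ ((n:ℝ) * (1/q - 1/p)) * r ^ (((n:ℝ) - n*p/q) * (1/p))) *
        (V ^ (1/q - 1/p) * V ^ (1/p)) * ((1 - p/q)⁻¹) ^ (1/p) := by ring
    _ = V ^ (1/q) * (1 - p/q) ^ (-(1/p)) := by rw [hrexp, hVexp, hinv, one_mul]


end MorreyAux
end Aux

open MorreyAux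

/-- The set of candidate values whose supremum defines the Morrey norm of `f`
on `ℝⁿ`: `|B(a,r)|^(1/q-1/p) (∫_{B(a,r)} |f|^p)^(1/p)` over all centers `a` and radii `r > 0`. -/
def morreySet (n : ℕ) (p q : ℝ) (f : EuclideanSpace ℝ (Fin n) → ℝ) : Set ℝ :=
  {v : ℝ | ∃ (a : EuclideanSpace ℝ (Fin n)) (r : ℝ), 0 < r ∧
    v = (volume (Metric.ball a r)).toReal ^ (1 / q - 1 / p) *
        (∫ x in Metric.ball a r, |f x| ^ p) ^ (1 / p)}

/-- The Morrey norm `‖f‖_{M^p_q}`. -/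
noncomputable def morreyNorm (n : ℕ) (p q : ℝ) (f : EuclideanSpace ℝ (Fin n) → ℝ) : ℝ :=
  sSup (morreySet n p q f)

/-- `f` belongs to the Morrey space `M^p_q(ℝⁿ)`: it is measurable and its Morrey norm
is finite (i.e. the defining supremum is over a bounded set). -/
def MemMorrey (n : ℕ) (p q : ℝ) (f : EuclideanSpace ℝ (Fin n) → ℝ) : Prop :=
  Measurable f ∧ BddAbove (morreySet n p q f)

open Metric

/-- `f(x) = |x|^{-n/q}` belongs to the Morrey space `M^p_q(ℝⁿ)` and its Morrey norm is
`|B(0,1)|^{1/q} (1 - p/q)^{-1/p}`. -/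
theorem morreyNorm_rpow_neg (n : ℕ) (hn : 1 ≤ n)
    (p q : ℝ) (hp : 1 ≤ p) (hpq : p < q)
    (f : EuclideanSpace ℝ (Fin n) → ℝ)
    (hf : ∀ x : EuclideanSpace ℝ (Fin n), x ≠ 0 → f x = ‖x‖ ^ (-((n : ℝ) / q))) :
    MemMorrey n p q f ∧
    morreyNorm n p q f =
      (volume (Metric.ball (0 : EuclideanSpace ℝ (Fin n)) 1)).toReal ^ (1 / q) *
        (1 - p / q) ^ (-(1 / p)) := by
  classical
  haveI : Nonempty (Fin n) := ⟨⟨0, hn⟩⟩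
  haveI : Nontrivial (EuclideanSpace ℝ (Fin n)) := inferInstance
  have hdim : Module.finrank ℝ (EuclideanSpace ℝ (Fin n)) = n := by simp
  have hp0 : (0:ℝ) < p := by linarith
  have hq0 : (0:ℝ) < q := by linarith
  have hn0 : (0:ℝ) < n := by exact_mod_cast hn
  set α : ℝ := (n:ℝ) * p / q with hαdef
  have hα : 0 < α := by positivity
  have hαn : α < (n:ℝ) := by
    rw [hαdef]
    have h1 : p / q < 1 := (div_lt_one hq0).2 hpq
    calc (n:ℝ) * p / q = (n:ℝ) * (p / q) := by ring
      _ < (n:ℝ) * 1 := by exact mul_lt_mul_of_pos_left h1 hn0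
      _ = (n:ℝ) := mul_one _
  have hαdim : α < (Module.finrank ℝ (EuclideanSpace ℝ (Fin n)) : ℝ) := by
    rw [hdim]; exact hαn
  have h0 : ∀ᵐ x ∂(volume : Measure (EuclideanSpace ℝ (Fin n))), x ≠ 0 := by
    rw [Filter.eventually_iff, mem_ae_iff]
    simpa using measure_singleton (0 : EuclideanSpace ℝ (Fin n))
  -- measurability of f
  have hfm : Measurable f := by
    have hfe : f = fun x : EuclideanSpace ℝ (Fin n) =>
        if x = 0 then f 0 else ‖x‖ ^ (-((n : ℝ) / q)) := by
      funext x
      by_cases hx : x = 0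
      · rw [if_pos hx, hx]
      · rw [if_neg hx, hf x hx]
    rw [hfe]
    exact Measurable.ite (MeasurableSet.singleton 0) measurable_const (by fun_prop)
  -- the integrand identity
  have hInt : ∀ (a : EuclideanSpace ℝ (Fin n)) (r : ℝ), 0 < r →
      ∫ x in ball a r, |f x| ^ p = ∫ x in ball a r, ‖x‖ ^ (-α) := by
    intro a r hr
    refine integral_congr_ae (ae_restrict_of_ae ?_)
    filter_upwards [h0] with x hx
    rw [hf x hx, abs_of_nonneg (Real.rpow_nonneg (norm_nonneg x) _),
      ← Real.rpow_mul (norm_nonneg x)]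
    congr 1
    rw [hαdef]
    ring
  set V : ℝ := (volume (ball (0:EuclideanSpace ℝ (Fin n)) 1)).toReal with hVdef
  have hV : 0 < V := ENNReal.toReal_pos (measure_ball_pos volume 0 one_pos).ne'
    measure_ball_lt_top.ne
  have hvol : ∀ (a : EuclideanSpace ℝ (Fin n)) (r : ℝ), 0 < r →
      (volume (ball a r)).toReal = r ^ n * V := by
    intro a r hr
    rw [hVdef, Measure.addHaar_ball volume a hr.le, ENNReal.toReal_mul,
      ENNReal.toReal_ofReal (pow_nonneg hr.le _), hdim]
  have hI0 : ∀ r : ℝ, 0 < r → ∫ x in ball (0:EuclideanSpace ℝ (Fin n)) r, ‖x‖ ^ (-α)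
      = (n:ℝ) * V * (r ^ ((n:ℝ) - α) / ((n:ℝ) - α)) := by
    intro r hr
    have := aux_ball_integral (volume : Measure (EuclideanSpace ℝ (Fin n))) hα hαdim hr
    rwa [hdim] at this
  set M : ℝ := V ^ (1/q) * (1 - p/q) ^ (-(1/p)) with hMdef
  have center_val : ∀ r : ℝ, 0 < r →
      (volume (ball (0:EuclideanSpace ℝ (Fin n)) r)).toReal ^ (1/q - 1/p) *
        (∫ x in ball (0:EuclideanSpace ℝ (Fin n)) r, ‖x‖ ^ (-α)) ^ (1/p) = M := by
    intro r hr
    rw [hvol 0 r hr, hI0 r hr, hMdef, hαdef]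
    exact compute_const n hn p q r V hp hpq hr hV
  have bound : ∀ v ∈ morreySet n p q f, v ≤ M := by
    rintro v ⟨a, r, hr, rfl⟩
    rw [hInt a r hr]
    have h1 : (volume (ball a r)).toReal
        = (volume (ball (0:EuclideanSpace ℝ (Fin n)) r)).toReal := by
      rw [hvol a r hr, hvol 0 r hr]
    rw [h1, ← center_val r hr]
    have h2 : ∫ x in ball a r, ‖x‖ ^ (-α)
        ≤ ∫ x in ball (0:EuclideanSpace ℝ (Fin n)) r, ‖x‖ ^ (-α) :=
      aux_ball_compare (volume : Measure (EuclideanSpace ℝ (Fin n))) hα hαdim hr a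
    have h3 : (0:ℝ) ≤ ∫ x in ball a r, ‖x‖ ^ (-α) :=
      setIntegral_nonneg measurableSet_ball fun x _ => Real.rpow_nonneg (norm_nonneg x) _
    have h4 : (∫ x in ball a r, ‖x‖ ^ (-α)) ^ (1/p)
        ≤ (∫ x in ball (0:EuclideanSpace ℝ (Fin n)) r, ‖x‖ ^ (-α)) ^ (1/p) :=
      Real.rpow_le_rpow h3 h2 (by positivity)
    exact mul_le_mul_of_nonneg_left h4 (Real.rpow_nonneg ENNReal.toReal_nonneg _)
  have mem : M ∈ morreySet n p q f := by
    refine ⟨0, 1, one_pos, ?_⟩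
    rw [hInt 0 1 one_pos, center_val 1 one_pos]
  have hgreat : IsGreatest (morreySet n p q f) M := ⟨mem, bound⟩
  refine ⟨⟨hfm, hgreat.bddAbove⟩, ?_⟩
  rw [morreyNorm, hgreat.csSup_eq]
end

section
/- Let $n \ge 1$ and $1 \le p < q < \infty$. Define $f(x) = |x|^{-n/q}$, $g(x) = \chi_{(0,1)}(|x|) f(x)$, $h(x) = f(x) - g(x)$, and $k(x) = g(x) - h(x)$ for $x \in \mathbb{R}^n \setminus \{0\}$. Then $\|f\|_{\mathcal{M}^p_q} = \|g\|_{\mathcal{M}^p_q} = \|h\|_{\mathcal{M}^p_q} = \|k\|_{\mathcal{M}^p_q}$. -/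
open MeasureTheory

open Metric Set Filter
open scoped ENNReal NNReal Pointwise

lemma integrableOn_rpow_neg_ball (n : ℕ) (hn : 1 ≤ n) {α : ℝ} (h0 : 0 < α) (hα : α < n) (R : ℝ) :
    IntegrableOn (fun x : EuclideanSpace ℝ (Fin n) => ‖x‖ ^ (-α))
      (Metric.ball 0 R) volume := by
  haveI : Nonempty (Fin n) := ⟨⟨0, hn⟩⟩
  have hfr : Module.finrank ℝ (EuclideanSpace ℝ (Fin n)) = n := finrank_euclideanSpace_fin
  rcases le_or_gt R 0 with hR | hR
  · rw [Metric.ball_eq_empty.2 hR]; exact integrableOn_empty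
  set E := EuclideanSpace ℝ (Fin n)
  set F : E → ℝ := fun x => ‖x‖ ^ (-α) with hF
  have hmeas : Measurable F := by fun_prop
  have hnonneg : ∀ x, 0 ≤ F x := fun x => Real.rpow_nonneg (norm_nonneg x) _
  constructor
  · exact hmeas.aestronglyMeasurable.restrict
  · rw [HasFiniteIntegral, lintegral_enorm_of_nonneg hnonneg]
    set μR := volume.restrict (Metric.ball (0 : E) R) with hμR
    rw [lintegral_eq_lintegral_meas_le μR (Filter.Eventually.of_forall hnonneg)
      hmeas.aemeasurable]
    have hsub : ∀ t : ℝ, 0 < t → {a : E | t ≤ F a} ⊆ Metric.closedBall 0 (t ^ (-α⁻¹)) := by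
      intro t ht a ha
      simp only [mem_setOf_eq] at ha
      have hna : 0 < ‖a‖ := by
        by_contra hcon
        push_neg at hcon
        have h00 : ‖a‖ = 0 := le_antisymm hcon (norm_nonneg a)
        rw [hF] at ha
        simp only [h00, Real.zero_rpow (neg_ne_zero.2 h0.ne')] at ha
        linarith
      rw [Metric.mem_closedBall, dist_zero_right]
      have h1 : F a ^ (-α⁻¹) ≤ t ^ (-α⁻¹) :=
        Real.rpow_le_rpow_of_nonpos ht ha (neg_nonpos.2 (inv_nonneg.2 h0.le))
      calc ‖a‖ = ‖a‖ ^ ((-α) * (-α⁻¹)) := by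
                rw [neg_mul_neg, mul_inv_cancel₀ h0.ne', Real.rpow_one]
        _ = F a ^ (-α⁻¹) := by rw [hF, Real.rpow_mul (norm_nonneg a)]
        _ ≤ t ^ (-α⁻¹) := h1
    set T : ℝ := R ^ (-α) with hT
    have hTpos : 0 < T := Real.rpow_pos_of_pos hR _
    calc ∫⁻ t in Ioi (0:ℝ), μR {a : E | t ≤ F a}
        ≤ ∫⁻ t in Ioc (0:ℝ) T ∪ Ioi T, μR {a : E | t ≤ F a} :=
          lintegral_mono_set (fun t ht => by
            rcases le_or_gt t T with h | h
            · exact Or.inl ⟨ht, h⟩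
            · exact Or.inr h)
      _ ≤ (∫⁻ t in Ioc (0:ℝ) T, μR {a : E | t ≤ F a})
            + ∫⁻ t in Ioi T, μR {a : E | t ≤ F a} := lintegral_union_le _ _ _
      _ < ∞ := by
          refine ENNReal.add_lt_top.2 ⟨?_, ?_⟩
          · calc (∫⁻ t in Ioc (0:ℝ) T, μR {a : E | t ≤ F a})
                ≤ ∫⁻ _ in Ioc (0:ℝ) T, volume (Metric.ball (0:E) R) := by
                  refine setLIntegral_mono' measurableSet_Ioc fun t ht => ?_
                  exact (measure_mono (subset_univ _)).trans
                    (le_of_eq (Measure.restrict_apply_univ _))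
              _ = volume (Metric.ball (0:E) R) * volume (Ioc (0:ℝ) T) :=
                  setLIntegral_const _ _
              _ < ∞ := ENNReal.mul_lt_top measure_ball_lt_top
                    (by rw [Real.volume_Ioc]; exact ENNReal.ofReal_lt_top)
          · calc (∫⁻ t in Ioi T, μR {a : E | t ≤ F a})
                ≤ ∫⁻ t in Ioi T, ENNReal.ofReal (t ^ (-((n:ℝ)/α)))
                    * volume (Metric.ball (0:E) 1) := by
                  refine setLIntegral_mono' measurableSet_Ioi fun t ht => ?_
                  have ht0 : 0 < t := lt_trans hTpos ht
                  calc μR {a : E | t ≤ F a}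
                      ≤ volume {a : E | t ≤ F a} := Measure.restrict_le_self _
                    _ ≤ volume (Metric.closedBall (0:E) (t ^ (-α⁻¹))) :=
                        measure_mono (hsub t ht0)
                    _ = ENNReal.ofReal ((t ^ (-α⁻¹)) ^ (Module.finrank ℝ E))
                          * volume (Metric.ball (0:E) 1) :=
                        Measure.addHaar_closedBall _ _ (Real.rpow_pos_of_pos ht0 _).le
                    _ = ENNReal.ofReal (t ^ (-((n:ℝ)/α))) * volume (Metric.ball (0:E) 1) := by
                        congr 1
                        rw [hfr, ← Real.rpow_natCast (t ^ (-α⁻¹)) n,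
                          ← Real.rpow_mul ht0.le]
                        congr 1
                        field_simp
              _ < ∞ := by
                  rw [lintegral_mul_const' _ _ measure_ball_lt_top.ne]
                  refine ENNReal.mul_lt_top ?_ measure_ball_lt_top
                  refine IntegrableOn.setLIntegral_lt_top ?_
                  refine integrableOn_Ioi_rpow_of_lt ?_ hTpos
                  rw [neg_lt_neg_iff, lt_div_iff₀ h0]
                  · linarith


lemma scaling_rpow_neg (n : ℕ) (hn : 1 ≤ n) {α : ℝ} (h0 : 0 < α)
    (a : EuclideanSpace ℝ (Fin n)) (r : ℝ) {c : ℝ} (hc : 0 < c) :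
    ∫ x in Metric.ball (c • a) (c * r), ‖x‖ ^ (-α) =
      c ^ ((n : ℝ) - α) * ∫ x in Metric.ball a r, ‖x‖ ^ (-α) := by
  haveI : Nonempty (Fin n) := ⟨⟨0, hn⟩⟩
  have hfr : Module.finrank ℝ (EuclideanSpace ℝ (Fin n)) = n := finrank_euclideanSpace_fin
  have hball : Metric.ball (c • a) (c * r) = c • Metric.ball a r := by
    rw [smul_ball hc.ne' a r, Real.norm_eq_abs, abs_of_pos hc]
  have h1 := Measure.setIntegral_comp_smul_of_pos volume
    (fun x : EuclideanSpace ℝ (Fin n) => ‖x‖ ^ (-α)) (Metric.ball a r) hc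
  have h2 : ∀ x : EuclideanSpace ℝ (Fin n),
      ‖c • x‖ ^ (-α) = c ^ (-α) * ‖x‖ ^ (-α) := by
    intro x
    rw [norm_smul, Real.norm_eq_abs, abs_of_pos hc, Real.mul_rpow hc.le (norm_nonneg x)]
  rw [hball]
  simp only [h2] at h1
  rw [integral_const_mul, smul_eq_mul] at h1
  have h3 : ∫ x in c • Metric.ball a r, ‖x‖ ^ (-α) =
      (c ^ Module.finrank ℝ (EuclideanSpace ℝ (Fin n))) * (c ^ (-α) * ∫ x in Metric.ball a r, ‖x‖ ^ (-α)) := by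
    rw [h1, ← mul_assoc, mul_inv_cancel₀ (by positivity), one_mul]
  rw [h3, hfr, ← Real.rpow_natCast c n, ← mul_assoc, ← Real.rpow_add hc, sub_eq_add_neg]

lemma pos_integral_rpow_neg_ball (n : ℕ) (hn : 1 ≤ n) {α : ℝ} (h0 : 0 < α) (hα : α < n)
    (a : EuclideanSpace ℝ (Fin n)) {r : ℝ} (hr : 0 < r) :
    0 < ∫ x in Metric.ball a r, ‖x‖ ^ (-α) := by
  haveI : Nonempty (Fin n) := ⟨⟨0, hn⟩⟩
  have hint : IntegrableOn (fun x : EuclideanSpace ℝ (Fin n) => ‖x‖ ^ (-α))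
      (Metric.ball a r) volume := by
    refine (integrableOn_rpow_neg_ball n hn h0 hα (‖a‖ + r)).mono_set ?_
    intro x hx
    rw [Metric.mem_ball, dist_zero_right]
    have : ‖x - a‖ < r := by rwa [Metric.mem_ball, dist_eq_norm] at hx
    calc ‖x‖ = ‖x - a + a‖ := by rw [sub_add_cancel]
      _ ≤ ‖x - a‖ + ‖a‖ := norm_add_le _ _
      _ < ‖a‖ + r := by linarith
  rw [setIntegral_pos_iff_support_of_nonneg_ae
    (Filter.Eventually.of_forall fun x => Real.rpow_nonneg (norm_nonneg x) _) hint]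
  have hss : Metric.ball a r \ {0} ⊆
      Function.support (fun x : EuclideanSpace ℝ (Fin n) => ‖x‖ ^ (-α)) ∩ Metric.ball a r := by
    rintro x ⟨hx1, hx2⟩
    refine ⟨?_, hx1⟩
    simp only [Function.mem_support]
    have : 0 < ‖x‖ := norm_pos_iff.2 (by simpa using hx2)
    positivity
  calc (0 : ℝ≥0∞) < volume (Metric.ball a r) := measure_ball_pos _ _ hr
    _ = volume (Metric.ball a r \ {0}) := (measure_diff_null (measure_singleton _)).symm
    _ ≤ _ := measure_mono hss

set_option maxHeartbeats 2000000 in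
/-- For `f(x) = |x|^{-n/q}`, `g = χ_{(0,1)}(|x|) f`, `h = f - g` and `k = g - h`, all four
functions have the same Morrey norm. -/
theorem morreyNorm_fghk_eq (n : ℕ) (hn : 1 ≤ n)
    (p q : ℝ) (hp : 1 ≤ p) (hpq : p < q)
    (f g h k : EuclideanSpace ℝ (Fin n) → ℝ)
    (hf : ∀ x : EuclideanSpace ℝ (Fin n), x ≠ 0 → f x = ‖x‖ ^ (-((n : ℝ) / q)))
    (hg : ∀ x : EuclideanSpace ℝ (Fin n), x ≠ 0 →
      g x = if 0 < ‖x‖ ∧ ‖x‖ < 1 then f x else 0)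
    (hh : h = f - g) (hk : k = g - h) :
    morreyNorm n p q f = morreyNorm n p q g ∧
    morreyNorm n p q g = morreyNorm n p q h ∧
    morreyNorm n p q h = morreyNorm n p q k := by
  classical
  haveI : Nonempty (Fin n) := ⟨⟨0, hn⟩⟩
  haveI : Nontrivial (EuclideanSpace ℝ (Fin n)) := by infer_instance
  haveI : NullSingletonClass (volume : Measure (EuclideanSpace ℝ (Fin n))) := by infer_instance
  have hp0 : (0:ℝ) < p := lt_of_lt_of_le one_pos hp
  have hq0 : (0:ℝ) < q := lt_trans hp0 hpq
  have hn0 : (0:ℝ) < n := by exact_mod_cast hn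
  set α : ℝ := ↑n * p / q with hαdef
  have hα0 : 0 < α := by positivity
  have hαn : α < n := by
    rw [hαdef, div_lt_iff₀ hq0]
    nlinarith
  set F : EuclideanSpace ℝ (Fin n) → ℝ := fun x => ‖x‖ ^ (-α) with hFdef
  have hFnn : ∀ x, 0 ≤ F x := fun x => Real.rpow_nonneg (norm_nonneg x) _
  have hInt : ∀ (a : EuclideanSpace ℝ (Fin n)) (r : ℝ),
      IntegrableOn F (Metric.ball a r) volume := by
    intro a r
    refine (integrableOn_rpow_neg_ball n hn hα0 hαn (‖a‖ + r)).mono_set ?_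
    intro x hx
    rw [Metric.mem_ball, dist_zero_right]
    have hxa : ‖x - a‖ < r := by rwa [Metric.mem_ball, dist_eq_norm] at hx
    calc ‖x‖ = ‖x - a + a‖ := by rw [sub_add_cancel]
      _ ≤ ‖x - a‖ + ‖a‖ := norm_add_le _ _
      _ < ‖a‖ + r := by linarith
  set I : EuclideanSpace ℝ (Fin n) → ℝ → ℝ :=
    fun a r => ∫ x in Metric.ball a r, F x with hIdef
  have hInn : ∀ a r, 0 ≤ I a r := fun a r =>
    setIntegral_nonneg measurableSet_ball fun x _ => hFnn x
  have hIpos : ∀ a r, 0 < r → 0 < I a r := fun a r hr =>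
    pos_integral_rpow_neg_ball n hn hα0 hαn a hr
  have hIscale : ∀ (a : EuclideanSpace ℝ (Fin n)) (r : ℝ) (c : ℝ), 0 < c →
      I (c • a) (c * r) = c ^ ((n:ℝ) - α) * I a r := fun a r c hc =>
    scaling_rpow_neg n hn hα0 a r hc
  set ω : ℝ := (volume (Metric.ball (0 : EuclideanSpace ℝ (Fin n)) 1)).toReal with hωdef
  have hωpos : 0 < ω :=
    ENNReal.toReal_pos (measure_ball_pos _ _ one_pos).ne' measure_ball_lt_top.ne
  have hvol : ∀ (a : EuclideanSpace ℝ (Fin n)) (r : ℝ), 0 < r →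
      (volume (Metric.ball a r)).toReal = r ^ (n:ℝ) * ω := by
    intro a r hr
    rw [Measure.addHaar_ball volume a hr.le, ENNReal.toReal_mul,
      ENNReal.toReal_ofReal (by positivity), finrank_euclideanSpace_fin,
      Real.rpow_natCast]
  -- a.e. pointwise facts
  have hae0 : ∀ᵐ x : EuclideanSpace ℝ (Fin n) ∂volume, x ≠ 0 := by
    rw [ae_iff]
    simp only [ne_eq, not_not, Set.setOf_eq_eq_singleton]
    exact measure_singleton 0
  have hcongr : ∀ (φ ψ : EuclideanSpace ℝ (Fin n) → ℝ)
      (a : EuclideanSpace ℝ (Fin n)) (r : ℝ),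
      (∀ x, x ≠ 0 → φ x = ψ x) →
      ∫ x in Metric.ball a r, φ x = ∫ x in Metric.ball a r, ψ x := by
    intro φ ψ a r hpt
    refine integral_congr_ae (ae_restrict_of_ae ?_)
    filter_upwards [hae0] with x hx
    exact hpt x hx
  have hfF : ∀ x : EuclideanSpace ℝ (Fin n), x ≠ 0 → |f x| ^ p = F x := by
    intro x hx
    rw [hf x hx, abs_of_nonneg (Real.rpow_nonneg (norm_nonneg x) _),
      ← Real.rpow_mul (norm_nonneg x)]
    congr 1
    rw [hαdef]; ring
  have hfp : ∀ (a : EuclideanSpace ℝ (Fin n)) (r : ℝ),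
      ∫ x in Metric.ball a r, |f x| ^ p = I a r :=
    fun a r => hcongr _ _ a r hfF
  have hgF : ∀ x : EuclideanSpace ℝ (Fin n), x ≠ 0 →
      |g x| ^ p = (Metric.ball (0 : EuclideanSpace ℝ (Fin n)) 1).indicator F x := by
    intro x hx
    have hx0 : 0 < ‖x‖ := norm_pos_iff.2 hx
    rw [hg x hx]
    by_cases hx1 : ‖x‖ < 1
    · rw [if_pos ⟨hx0, hx1⟩, Set.indicator_of_mem (mem_ball_zero_iff.2 hx1), hfF x hx]
    · rw [if_neg (fun hcon => hx1 hcon.2),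
        Set.indicator_of_notMem (fun hcon => hx1 (mem_ball_zero_iff.1 hcon)), abs_zero,
        Real.zero_rpow hp0.ne']
  have hgp : ∀ (a : EuclideanSpace ℝ (Fin n)) (r : ℝ),
      ∫ x in Metric.ball a r, |g x| ^ p =
        ∫ x in Metric.ball a r ∩ Metric.ball 0 1, F x := by
    intro a r
    rw [hcongr _ _ a r hgF, setIntegral_indicator measurableSet_ball]
  have hhF : ∀ x : EuclideanSpace ℝ (Fin n), x ≠ 0 →
      |h x| ^ p = ((Metric.ball (0 : EuclideanSpace ℝ (Fin n)) 1)ᶜ).indicator F x := by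
    intro x hx
    have hx0 : 0 < ‖x‖ := norm_pos_iff.2 hx
    have hhx : h x = f x - g x := by rw [hh]; rfl
    rw [hhx, hg x hx]
    by_cases hx1 : ‖x‖ < 1
    · rw [if_pos ⟨hx0, hx1⟩, sub_self,
        Set.indicator_of_notMem (fun hcon => (Set.notMem_compl_iff.2 (mem_ball_zero_iff.2 hx1)) hcon),
        abs_zero, Real.zero_rpow hp0.ne']
    · rw [if_neg (fun hcon => hx1 hcon.2), sub_zero,
        Set.indicator_of_mem (Set.mem_compl (fun hcon => hx1 (mem_ball_zero_iff.1 hcon))),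
        hfF x hx]
  have hhp : ∀ (a : EuclideanSpace ℝ (Fin n)) (r : ℝ),
      ∫ x in Metric.ball a r, |h x| ^ p =
        I a r - ∫ x in Metric.ball a r ∩ Metric.ball 0 1, F x := by
    intro a r
    rw [hcongr _ _ a r hhF, setIntegral_indicator measurableSet_ball.compl]
    have hsplit := integral_inter_add_diff (s := Metric.ball a r)
      (t := Metric.ball (0 : EuclideanSpace ℝ (Fin n)) 1) (f := F)
      measurableSet_ball (hInt a r) (μ := volume)
    rw [Set.diff_eq] at hsplit
    linarith [hsplit]
  have hkF : ∀ x : EuclideanSpace ℝ (Fin n), x ≠ 0 → |k x| ^ p = F x := by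
    intro x hx
    have hx0 : 0 < ‖x‖ := norm_pos_iff.2 hx
    have hkx : k x = g x - h x := by rw [hk]; rfl
    have hhx : h x = f x - g x := by rw [hh]; rfl
    rw [hkx, hhx, hg x hx]
    by_cases hx1 : ‖x‖ < 1
    · rw [if_pos ⟨hx0, hx1⟩]
      simpa using hfF x hx
    · rw [if_neg (fun hcon => hx1 hcon.2)]
      rw [show (0:ℝ) - (f x - 0) = -(f x) by ring, abs_neg]
      exact hfF x hx
  have hkp : ∀ (a : EuclideanSpace ℝ (Fin n)) (r : ℝ),
      ∫ x in Metric.ball a r, |k x| ^ p = I a r :=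
    fun a r => hcongr _ _ a r hkF
  -- monotonicity facts
  have hinter_nn : ∀ (a : EuclideanSpace ℝ (Fin n)) (r : ℝ),
      0 ≤ ∫ x in Metric.ball a r ∩ Metric.ball 0 1, F x := fun a r =>
    setIntegral_nonneg (measurableSet_ball.inter measurableSet_ball) fun x _ => hFnn x
  have hinter_le : ∀ (a : EuclideanSpace ℝ (Fin n)) (r : ℝ),
      (∫ x in Metric.ball a r ∩ Metric.ball 0 1, F x) ≤ I a r := fun a r =>
    setIntegral_mono_set (hInt a r)
      (Filter.Eventually.of_forall fun x => hFnn x)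
      (HasSubset.Subset.eventuallyLE Set.inter_subset_left)
  have hinter_le01 : ∀ (a : EuclideanSpace ℝ (Fin n)) (r : ℝ),
      (∫ x in Metric.ball a r ∩ Metric.ball 0 1, F x) ≤ I 0 1 := fun a r =>
    setIntegral_mono_set (hInt 0 1)
      (Filter.Eventually.of_forall fun x => hFnn x)
      (HasSubset.Subset.eventuallyLE Set.inter_subset_right)
  -- key scaling identity for the Morrey quantity
  have key : ∀ (a : EuclideanSpace ℝ (Fin n)) (r : ℝ), 0 < r → ∀ c : ℝ, 0 < c →
      ∀ J : ℝ, 0 ≤ J →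
      (volume (Metric.ball (c • a) (c * r))).toReal ^ (1 / q - 1 / p) *
        (c ^ ((n:ℝ) - α) * J) ^ (1 / p) =
      (volume (Metric.ball a r)).toReal ^ (1 / q - 1 / p) * J ^ (1 / p) := by
    intro a r hr c hc J hJ
    rw [hvol _ _ (mul_pos hc hr), hvol a r hr, Real.mul_rpow hc.le hr.le, mul_assoc,
      Real.mul_rpow (Real.rpow_nonneg hc.le _)
        (mul_nonneg (Real.rpow_nonneg hr.le _) hωpos.le),
      Real.mul_rpow (Real.rpow_nonneg hc.le _) hJ,
      Real.mul_rpow (Real.rpow_nonneg hr.le _) hωpos.le]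
    have hc1 : (c ^ ((n:ℝ))) ^ (1/q - 1/p) * (c ^ ((n:ℝ) - α)) ^ (1/p) = 1 := by
      rw [← Real.rpow_mul hc.le, ← Real.rpow_mul hc.le, ← Real.rpow_add hc]
      rw [show (n:ℝ) * (1/q - 1/p) + ((n:ℝ) - α) * (1/p) = 0 from by
        rw [hαdef]; field_simp; ring]
      exact Real.rpow_zero c
    linear_combination ((r ^ ((n:ℝ))) ^ (1/q - 1/p) * ω ^ (1/q - 1/p) * J ^ (1/p)) * hc1
  -- uniform bound on Morrey quantities
  set M : ℝ := max ((((3:ℝ)⁻¹) ^ ((n:ℝ)) * ω) ^ (1/q - 1/p) * (I 0 1) ^ (1/p))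
      (((1:ℝ) ^ ((n:ℝ)) * ω) ^ (1/q - 1/p) * ω ^ (1/p)) with hMdef
  have hb : ∀ (a : EuclideanSpace ℝ (Fin n)) (r : ℝ), 0 < r → ∀ J : ℝ, 0 ≤ J → J ≤ I a r →
      (volume (Metric.ball a r)).toReal ^ (1/q - 1/p) * J ^ (1/p) ≤ M := by
    intro a r hr J hJ0 hJI
    have hvnn : (0:ℝ) ≤ (volume (Metric.ball a r)).toReal ^ (1/q - 1/p) :=
      Real.rpow_nonneg ENNReal.toReal_nonneg _
    have hJ' : J ^ (1/p) ≤ (I a r) ^ (1/p) := Real.rpow_le_rpow hJ0 hJI (by positivity)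
    refine le_trans (mul_le_mul_of_nonneg_left hJ' hvnn) ?_
    rcases le_or_gt ‖a‖ (2*r) with hcase | hcase
    · -- ball near origin : compare with I 0 (3r)
      have h3r : (0:ℝ) < 3*r := by linarith
      have hsub : Metric.ball a r ⊆ Metric.ball (0 : EuclideanSpace ℝ (Fin n)) (3*r) := by
        intro x hx
        rw [Metric.mem_ball, dist_zero_right]
        have hxa : ‖x - a‖ < r := by rwa [Metric.mem_ball, dist_eq_norm] at hx
        calc ‖x‖ = ‖x - a + a‖ := by rw [sub_add_cancel]
          _ ≤ ‖x - a‖ + ‖a‖ := norm_add_le _ _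
          _ < 3*r := by linarith
      have h1 : I a r ≤ I 0 (3*r) :=
        setIntegral_mono_set (hInt 0 (3*r)) (Filter.Eventually.of_forall fun x => hFnn x)
          (HasSubset.Subset.eventuallyLE hsub)
      have h2 : I 0 (3*r) = (3*r) ^ ((n:ℝ) - α) * I 0 1 := by
        have := hIscale 0 1 (3*r) h3r
        simpa [smul_zero, mul_one] using this
      have hkey := key ((3*r)⁻¹ • a) 3⁻¹ (by norm_num) (3*r) h3r (I 0 1) (hInn 0 1)
      rw [smul_smul, mul_inv_cancel₀ h3r.ne', one_smul,
        show (3*r) * 3⁻¹ = r by ring, hvol _ 3⁻¹ (by norm_num)] at hkey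
      calc (volume (Metric.ball a r)).toReal ^ (1/q - 1/p) * (I a r) ^ (1/p)
          ≤ (volume (Metric.ball a r)).toReal ^ (1/q - 1/p)
              * ((3*r) ^ ((n:ℝ) - α) * I 0 1) ^ (1/p) := by
            refine mul_le_mul_of_nonneg_left ?_ hvnn
            refine Real.rpow_le_rpow (hInn a r) ?_ (by positivity)
            rw [← h2]; exact h1
        _ = (((3:ℝ)⁻¹) ^ ((n:ℝ)) * ω) ^ (1/q - 1/p) * (I 0 1) ^ (1/p) := hkey
        _ ≤ M := le_max_left _ _
    · -- ball far from origin : integrand bounded by r ^ (-α)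
      have hpt : ∀ x ∈ Metric.ball a r, F x ≤ r ^ (-α) := by
        intro x hx
        have hxa : ‖x - a‖ < r := by rwa [Metric.mem_ball, dist_eq_norm] at hx
        have hxlb : r < ‖x‖ := by
          have : ‖a‖ ≤ ‖a - x‖ + ‖x‖ := by
            calc ‖a‖ = ‖a - x + x‖ := by rw [sub_add_cancel]
              _ ≤ ‖a - x‖ + ‖x‖ := norm_add_le _ _
          rw [norm_sub_rev] at this
          linarith
        exact Real.rpow_le_rpow_of_nonpos hr hxlb.le (neg_nonpos.2 hα0.le)
      have h1 : I a r ≤ r ^ ((n:ℝ) - α) * ω := by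
        calc I a r ≤ ∫ _x in Metric.ball a r, r ^ (-α) :=
              setIntegral_mono_on (hInt a r)
                (integrableOn_const measure_ball_lt_top.ne) measurableSet_ball hpt
          _ = (volume (Metric.ball a r)).toReal * r ^ (-α) := by
              rw [setIntegral_const, smul_eq_mul, measureReal_def]
          _ = r ^ ((n:ℝ) - α) * ω := by
              rw [hvol a r hr, mul_comm (r ^ ((n:ℝ))) ω, mul_assoc,
                ← Real.rpow_add hr, ← sub_eq_add_neg, mul_comm]
      have hkey := key (r⁻¹ • a) 1 one_pos r hr ω hωpos.le
      rw [smul_smul, mul_inv_cancel₀ hr.ne', one_smul, mul_one,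
        hvol _ 1 one_pos] at hkey
      calc (volume (Metric.ball a r)).toReal ^ (1/q - 1/p) * (I a r) ^ (1/p)
          ≤ (volume (Metric.ball a r)).toReal ^ (1/q - 1/p)
              * (r ^ ((n:ℝ) - α) * ω) ^ (1/p) := by
            refine mul_le_mul_of_nonneg_left ?_ hvnn
            exact Real.rpow_le_rpow (hInn a r) h1 (by positivity)
        _ = ((1:ℝ) ^ ((n:ℝ)) * ω) ^ (1/q - 1/p) * ω ^ (1/p) := hkey
        _ ≤ M := le_max_right _ _
  -- bounds on all four Morrey sets
  have hboundf : ∀ v ∈ morreySet n p q f, v ≤ M := by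
    rintro v ⟨a, r, hr, rfl⟩
    rw [hfp a r]
    exact hb a r hr _ (hInn a r) le_rfl
  have hboundg : ∀ v ∈ morreySet n p q g, v ≤ M := by
    rintro v ⟨a, r, hr, rfl⟩
    rw [hgp a r]
    exact hb a r hr _ (hinter_nn a r) (hinter_le a r)
  have hboundh : ∀ v ∈ morreySet n p q h, v ≤ M := by
    rintro v ⟨a, r, hr, rfl⟩
    rw [hhp a r]
    exact hb a r hr _ (by linarith [hinter_le a r]) (by linarith [hinter_nn a r])
  have hBf : BddAbove (morreySet n p q f) := ⟨M, hboundf⟩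
  have hBg : BddAbove (morreySet n p q g) := ⟨M, hboundg⟩
  have hBh : BddAbove (morreySet n p q h) := ⟨M, hboundh⟩
  have hne : ∀ φ : EuclideanSpace ℝ (Fin n) → ℝ, (morreySet n p q φ).Nonempty :=
    fun φ => ⟨_, ⟨0, 1, one_pos, rfl⟩⟩
  have hSk : morreySet n p q k = morreySet n p q f := by
    ext v
    constructor
    · rintro ⟨a, r, hr, rfl⟩
      exact ⟨a, r, hr, by rw [hkp a r, hfp a r]⟩
    · rintro ⟨a, r, hr, rfl⟩
      exact ⟨a, r, hr, by rw [hkp a r, hfp a r]⟩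
  -- f and g have the same norm
  have efg : morreyNorm n p q f = morreyNorm n p q g := by
    rw [morreyNorm, morreyNorm]
    apply le_antisymm
    · refine csSup_le (hne f) ?_
      rintro v ⟨a, r, hr, rfl⟩
      rw [hfp a r]
      have har : 0 < ‖a‖ + r := by positivity
      set c : ℝ := (2*(‖a‖ + r))⁻¹ with hcdef
      have hc : 0 < c := by positivity
      have hsub : Metric.ball (c • a) (c * r) ⊆
          Metric.ball (0 : EuclideanSpace ℝ (Fin n)) 1 := by
        intro x hx
        rw [Metric.mem_ball, dist_zero_right]
        have hxa : ‖x - c • a‖ < c * r := by rwa [Metric.mem_ball, dist_eq_norm] at hx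
        have hca : ‖c • a‖ = c * ‖a‖ := by rw [norm_smul, Real.norm_eq_abs, abs_of_pos hc]
        have hhalf : c * r + c * ‖a‖ ≤ 1/2 := by
          rw [hcdef, show (2*(‖a‖ + r))⁻¹ * r + (2*(‖a‖ + r))⁻¹ * ‖a‖
            = (r + ‖a‖)/(2*(‖a‖+r)) from by ring, div_le_iff₀ (by positivity)]
          linarith
        calc ‖x‖ = ‖x - c•a + c•a‖ := by rw [sub_add_cancel]
          _ ≤ ‖x - c•a‖ + ‖c•a‖ := norm_add_le _ _
          _ < c*r + c*‖a‖ := by rw [hca]; linarith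
          _ ≤ 1/2 := hhalf
          _ < 1 := by norm_num
      have hgI : ∫ x in Metric.ball (c • a) (c * r), |g x| ^ p = I (c • a) (c * r) := by
        rw [hgp, Set.inter_eq_left.2 hsub]
      refine le_csSup hBg ⟨c • a, c * r, by positivity, ?_⟩
      rw [hgI, hIscale a r c hc, key a r hr c hc (I a r) (hInn a r)]
    · refine csSup_le (hne g) ?_
      rintro v ⟨a, r, hr, rfl⟩
      refine le_trans ?_ (le_csSup hBf ⟨a, r, hr, rfl⟩)
      rw [hfp a r, hgp a r]
      exact mul_le_mul_of_nonneg_left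
        (Real.rpow_le_rpow (hinter_nn a r) (hinter_le a r) (by positivity))
        (Real.rpow_nonneg ENNReal.toReal_nonneg _)
  -- f and h have the same norm
  have efh : morreyNorm n p q f = morreyNorm n p q h := by
    rw [morreyNorm, morreyNorm]
    apply le_antisymm
    · refine csSup_le (hne f) ?_
      rintro v ⟨a, r, hr, rfl⟩
      rw [hfp a r]
      have hApos : 0 < I a r := hIpos a r hr
      have hI01nn : 0 ≤ I 0 1 := hInn 0 1
      have htend0 : Filter.Tendsto (fun c : ℝ => c ^ (α - (n:ℝ)))
          Filter.atTop (nhds 0) := by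
        have := tendsto_rpow_neg_atTop (show (0:ℝ) < (n:ℝ) - α by linarith)
        simpa [neg_sub] using this
      have hcont : ContinuousAt (fun t : ℝ =>
          (volume (Metric.ball a r)).toReal ^ (1/q - 1/p)
            * (I a r - t * I 0 1) ^ (1/p)) 0 := by
        refine ContinuousAt.mul continuousAt_const ?_
        refine ContinuousAt.rpow_const (by fun_prop) ?_
        right; positivity
      have htend : Filter.Tendsto (fun c : ℝ =>
          (volume (Metric.ball a r)).toReal ^ (1/q - 1/p)
            * (I a r - c ^ (α - (n:ℝ)) * I 0 1) ^ (1/p)) Filter.atTop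
          (nhds ((volume (Metric.ball a r)).toReal ^ (1/q - 1/p) * (I a r) ^ (1/p))) := by
        have := hcont.tendsto.comp htend0
        simpa [Function.comp_def] using this
      refine le_of_tendsto htend ?_
      filter_upwards [Filter.eventually_gt_atTop (0:ℝ),
        htend0.eventually (eventually_lt_nhds
          (show (0:ℝ) < I a r / (I 0 1 + 1) by positivity))] with c hc hlt
      have hD0 : 0 ≤ I a r - c ^ (α - (n:ℝ)) * I 0 1 := by
        have hcnn : 0 ≤ c ^ (α - (n:ℝ)) := Real.rpow_nonneg hc.le _
        have h1 : c ^ (α - (n:ℝ)) * I 0 1 ≤ (I a r / (I 0 1 + 1)) * (I 0 1 + 1) := by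
          nlinarith
        rw [div_mul_cancel₀ _ (by positivity : I 0 1 + 1 ≠ 0)] at h1
        linarith
      have hcancel : c ^ ((n:ℝ) - α) * c ^ (α - (n:ℝ)) = 1 := by
        rw [← Real.rpow_add hc, show ((n:ℝ) - α) + (α - (n:ℝ)) = 0 from by ring]
        exact Real.rpow_zero c
      have hlow : c ^ ((n:ℝ) - α) * (I a r - c ^ (α - (n:ℝ)) * I 0 1)
          ≤ ∫ x in Metric.ball (c • a) (c * r), |h x| ^ p := by
        rw [hhp, hIscale a r c hc]
        have hle01 := hinter_le01 (c • a) (c * r)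
        have expand : c ^ ((n:ℝ) - α) * (I a r - c ^ (α - (n:ℝ)) * I 0 1)
            = c ^ ((n:ℝ) - α) * I a r - I 0 1 := by
          rw [mul_sub, ← mul_assoc, hcancel, one_mul]
        rw [expand]
        linarith
      have hDnn : 0 ≤ c ^ ((n:ℝ) - α) * (I a r - c ^ (α - (n:ℝ)) * I 0 1) :=
        mul_nonneg (Real.rpow_nonneg hc.le _) hD0
      calc (volume (Metric.ball a r)).toReal ^ (1/q - 1/p)
            * (I a r - c ^ (α - (n:ℝ)) * I 0 1) ^ (1/p)
          = (volume (Metric.ball (c • a) (c * r))).toReal ^ (1/q - 1/p)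
              * (c ^ ((n:ℝ) - α) * (I a r - c ^ (α - (n:ℝ)) * I 0 1)) ^ (1/p) :=
            (key a r hr c hc _ hD0).symm
        _ ≤ (volume (Metric.ball (c • a) (c * r))).toReal ^ (1/q - 1/p)
              * (∫ x in Metric.ball (c • a) (c * r), |h x| ^ p) ^ (1/p) :=
            mul_le_mul_of_nonneg_left (Real.rpow_le_rpow hDnn hlow (by positivity))
              (Real.rpow_nonneg ENNReal.toReal_nonneg _)
        _ ≤ sSup (morreySet n p q h) :=
            le_csSup hBh ⟨c • a, c * r, by positivity, rfl⟩
    · refine csSup_le (hne h) ?_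
      rintro v ⟨a, r, hr, rfl⟩
      refine le_trans ?_ (le_csSup hBf ⟨a, r, hr, rfl⟩)
      rw [hfp a r, hhp a r]
      exact mul_le_mul_of_nonneg_left
        (Real.rpow_le_rpow (by linarith [hinter_le a r]) (by linarith [hinter_nn a r])
          (by positivity))
        (Real.rpow_nonneg ENNReal.toReal_nonneg _)
  have ekf : morreyNorm n p q k = morreyNorm n p q f := by
    rw [morreyNorm, morreyNorm, hSk]
  exact ⟨efg, efg.symm.trans efh, efh.symm.trans ekf.symm⟩
end

section
/- Let $X$ be a Banach space with $X \ne \{0\}$ and let $1 \le s < \infty$. Then $1 \le C_{NJ}^{(s)}(X) \le 2$, where $C_{NJ}^{(s)}(X)$ is the generalized Von Neumann-Jordan constant of $X$. -/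
lemma vnj_key {a b s : ℝ} (ha : 0 ≤ a) (hb : 0 ≤ b) (hs : 1 ≤ s) :
    (a + b) ^ s ≤ 2 ^ (s - 1) * (a ^ s + b ^ s) := by
  have h := NNReal.rpow_add_le_mul_rpow_add_rpow a.toNNReal b.toNNReal hs
  have h2 := NNReal.coe_le_coe.2 h
  simpa [NNReal.coe_rpow, Real.coe_toNNReal, ha, hb] using h2

/-- For any nontrivial Banach space `X` and `1 ≤ s < ∞`, the generalized Von Neumann–Jordan
constant of `X` satisfies `1 ≤ C_{NJ}^{(s)}(X) ≤ 2`. -/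
theorem genVonNeumannJordan_bounds (X : Type*) [NormedAddCommGroup X] [NormedSpace ℝ X]
    [CompleteSpace X] (hX : ∃ x : X, x ≠ 0) (s : ℝ) (hs : 1 ≤ s) :
    1 ≤ sSup {v : ℝ | ∃ x y : X, x ≠ 0 ∧ y ≠ 0 ∧
        v = (‖x + y‖ ^ s + ‖x - y‖ ^ s) / (2 ^ (s - 1) * (‖x‖ ^ s + ‖y‖ ^ s))} ∧
    sSup {v : ℝ | ∃ x y : X, x ≠ 0 ∧ y ≠ 0 ∧
        v = (‖x + y‖ ^ s + ‖x - y‖ ^ s) / (2 ^ (s - 1) * (‖x‖ ^ s + ‖y‖ ^ s))} ≤ 2 := by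
  set S := {v : ℝ | ∃ x y : X, x ≠ 0 ∧ y ≠ 0 ∧
        v = (‖x + y‖ ^ s + ‖x - y‖ ^ s) / (2 ^ (s - 1) * (‖x‖ ^ s + ‖y‖ ^ s))} with hS
  have hs0 : s ≠ 0 := by linarith
  -- every element of S is ≤ 2
  have hub : ∀ v ∈ S, v ≤ 2 := by
    rintro v ⟨x, y, hx, hy, rfl⟩
    have hxs : 0 < ‖x‖ ^ s := Real.rpow_pos_of_pos (norm_pos_iff.2 hx) s
    have hys : 0 < ‖y‖ ^ s := Real.rpow_pos_of_pos (norm_pos_iff.2 hy) s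
    have hD : 0 < 2 ^ (s - 1) * (‖x‖ ^ s + ‖y‖ ^ s) := by
      apply mul_pos (Real.rpow_pos_of_pos two_pos _) (by linarith)
    rw [div_le_iff₀ hD]
    have h1 : ‖x + y‖ ^ s ≤ 2 ^ (s - 1) * (‖x‖ ^ s + ‖y‖ ^ s) :=
      le_trans (Real.rpow_le_rpow (norm_nonneg _) (norm_add_le x y) (by linarith))
        (vnj_key (norm_nonneg x) (norm_nonneg y) hs)
    have h2 : ‖x - y‖ ^ s ≤ 2 ^ (s - 1) * (‖x‖ ^ s + ‖y‖ ^ s) :=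
      le_trans (Real.rpow_le_rpow (norm_nonneg _) (norm_sub_le x y) (by linarith))
        (vnj_key (norm_nonneg x) (norm_nonneg y) hs)
    linarith
  have hbdd : BddAbove S := ⟨2, hub⟩
  -- 1 ∈ S
  have h1S : (1 : ℝ) ∈ S := by
    obtain ⟨x, hx⟩ := hX
    refine ⟨x, x, hx, hx, ?_⟩
    have hxn : (0:ℝ) < ‖x‖ := norm_pos_iff.2 hx
    have hxs : 0 < ‖x‖ ^ s := Real.rpow_pos_of_pos hxn s
    have hadd : ‖x + x‖ = 2 * ‖x‖ := by
      rw [← two_smul ℝ x, norm_smul]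
      simp
    rw [hadd, sub_self, norm_zero, Real.zero_rpow hs0,
      Real.mul_rpow (by norm_num) (norm_nonneg x)]
    rw [show (2:ℝ) ^ s * ‖x‖ ^ s + 0 = 2 ^ s * ‖x‖ ^ s by ring]
    rw [show 2 ^ (s-1) * (‖x‖ ^ s + ‖x‖ ^ s) = (2 ^ (s-1) * 2) * ‖x‖ ^ s by ring]
    rw [show (2:ℝ) ^ (s-1) * 2 = 2 ^ s by
      nth_rewrite 2 [show (2:ℝ) = 2 ^ (1:ℝ) by norm_num]
      rw [← Real.rpow_add two_pos]; norm_num]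
    rw [eq_comm, div_eq_one_iff_eq]
    positivity
  exact ⟨le_csSup hbdd h1S, Real.sSup_le hub (by norm_num)⟩
end
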